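/- If the potential V is a polynomial of degree at most 2, then the Wigner pseudo-differential term reduces to the classical force term: Θ_V[f](x,k) = (1/ħ) V'(x) ∂_k f(x,k) for every Schwartz function f. -/

import Mathlib

open MeasureTheory

/-- The pseudo-differential term Θ_V[f] in its original y-integral form. -/
noncomputable def Theta (hbar : ℝ) (V : ℝ → ℝ) (f : ℝ → ℝ → ℂ) (x k : ℝ) : ℂ :=
  (1 / (2 * Real.pi * Complex.I * hbar)) *
    ∫ y : ℝ, Complex.exp (-Complex.I * k * y) *
      ((V (x + y / 2) - V (x - y / 2) : ℝ) : ℂ) *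
      ∫ k' : ℝ, Complex.exp (Complex.I * k' * y) * f x k'

/-!
For a polynomial of degree at most 2 the symmetric difference `V (x + y/2) - V (x - y/2)` is
exactly `V' x * y`, so `Θ_V[f]` is `V' x / (2πiħ)` times `∫ e^{-iky} y f̂(y) dy`, with `f̂` the
Fourier transform in the convention `∫ e^{ik'y} f(k') dk'`. Multiplication by `y` on the Fourier
side is differentiation in `k`, and Fourier inversion for the Schwartz function `∂_k f` gives
`∫ e^{-iky} y f̂(y) dy = 2πi ∂_k f(k)`.
-/

open Real FourierTransform Complex

theorem Polynomial.eval_add_half_sub_eval_sub_half {V : Polynomial ℝ} (hV : V.natDegree ≤ 2)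
    (x y : ℝ) : V.eval (x + y / 2) - V.eval (x - y / 2) = V.derivative.eval x * y := by
  have hV' : V.natDegree < 3 := by omega
  have hdV : V.derivative.natDegree < 2 := (natDegree_derivative_le V).trans_lt (by omega)
  rw [eval_eq_sum_range' hV', eval_eq_sum_range' hV', eval_eq_sum_range' hdV]
  simp only [Finset.sum_range_succ, Finset.range_one, Finset.sum_singleton, pow_zero, mul_one,
    pow_one, coeff_derivative, zero_add, CharP.cast_eq_zero, Nat.reduceAdd, Nat.cast_one]
  ring

theorem integral_exp_mul_eq_fourier (g : ℝ → ℂ) (y : ℝ) :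
    ∫ k' : ℝ, exp (I * k' * y) * g k' = 𝓕 g (-(y / (2 * π))) := by
  rw [Real.fourier_eq']
  congr 1 with v
  rw [smul_eq_mul, RCLike.inner_apply, conj_trivial]
  congr 2
  push_cast
  field_simp

/-- Fourier inversion for `g'`, whose Fourier transform is `2πi u 𝓕 g u`. -/
theorem SchwartzMap.deriv_eq_integral_fourier (g : SchwartzMap ℝ ℂ) (k : ℝ) :
    deriv g k = 2 * π * I * ∫ u : ℝ, exp (2 * π * u * k * I) * (u * 𝓕 (g : ℝ → ℂ) u) := by
  have hderiv : deriv g = derivCLM ℝ ℂ g := rfl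
  have hinv : 𝓕⁻ (𝓕 (deriv g)) k = deriv g k := by
    rw [hderiv]
    exact congrFun ((derivCLM ℝ ℂ g).continuous.fourierInv_fourier_eq
      (derivCLM ℝ ℂ g).integrable (𝓕 (derivCLM ℝ ℂ g)).integrable) k
  rw [← hinv, Real.fourier_deriv g.integrable g.differentiable
      (hderiv ▸ (derivCLM ℝ ℂ g).integrable), Real.fourierInv_eq', ← integral_const_mul]
  congr 1 with u
  simp only [RCLike.inner_apply, conj_trivial, smul_eq_mul]
  push_cast
  ring_nf

theorem SchwartzMap.integral_exp_mul_mul_integral_exp_mul (g : SchwartzMap ℝ ℂ) (k : ℝ) :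
    ∫ y : ℝ, exp (-I * k * y) * y * ∫ k' : ℝ, exp (I * k' * y) * g k' =
      2 * π * I * deriv g k := by
  set F : ℝ → ℂ := fun u ↦ exp (2 * π * u * k * I) * (u * 𝓕 (g : ℝ → ℂ) u)
  have hsubst : ∀ y : ℝ, exp (-I * k * y) * y * 𝓕 (g : ℝ → ℂ) (-(y / (2 * π))) =
      -(2 * π) * F ((-(2 * π))⁻¹ * y) := by
    intro y
    have hu : (-(2 * π))⁻¹ * y = -(y / (2 * π)) := by field_simp
    simp only [F, hu]
    push_cast
    field_simp
  simp_rw [integral_exp_mul_eq_fourier, hsubst, integral_const_mul,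
    Measure.integral_comp_mul_left F, inv_inv, abs_neg, abs_of_pos two_pi_pos, real_smul,
    g.deriv_eq_integral_fourier]
  push_cast
  linear_combination (-4 * π ^ 2 * ∫ u, F u) * I_sq

theorem stmt0_general (hbar : ℝ) (V : Polynomial ℝ) (hV : V.natDegree ≤ 2)
    (f : ℝ → SchwartzMap ℝ ℂ) (x k : ℝ) :
    Theta hbar (fun t => V.eval t) (fun x k => f x k) x k =
      (1 / hbar : ℂ) * ((V.derivative.eval x : ℝ) : ℂ) * deriv (fun k' => f x k') k := by
  have hintegrand : ∀ y : ℝ, exp (-I * k * y) * ((V.derivative.eval x * y : ℝ) : ℂ) *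
      ∫ k' : ℝ, exp (I * k' * y) * f x k' =
      V.derivative.eval x * (exp (-I * k * y) * y * ∫ k' : ℝ, exp (I * k' * y) * f x k') := by
    intro y
    push_cast
    ring
  have h2πI : (2 * π * I : ℂ) ≠ 0 := by simp [pi_ne_zero, I_ne_zero]
  simp only [Theta, Polynomial.eval_add_half_sub_eval_sub_half hV, hintegrand,
    integral_const_mul, (f x).integral_exp_mul_mul_integral_exp_mul]
  rw [one_div, one_div, mul_inv]
  field_simp

/-- If `V` is a polynomial of degree at most 2, the pseudo-differential term reduces to the
classical force term `(1/ħ) V'(x) ∂_k f(x,k)` for every Schwartz function `f` in `k`. -/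
theorem stmt0 (hbar : ℝ) (hhbar : 0 < hbar) (V : Polynomial ℝ) (hV : V.natDegree ≤ 2)
    (f : ℝ → SchwartzMap ℝ ℂ) (x k : ℝ) :
    Theta hbar (fun t => V.eval t) (fun x k => f x k) x k =
      (1 / hbar : ℂ) * ((V.derivative.eval x : ℝ) : ℂ) * deriv (fun k' => f x k') k :=
  stmt0_general hbar V hV f x k
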